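/- arXiv:1211.2301 — 3 statements merged into one kernel-verified Lean document; each statement's English description precedes it below -/
import Mathlib

section
/- Let e be a transitive relation on a set E and let (aᵢ)_{i∈I} be a family of clopen subsets of e. Then: (i) the family {aᵢ : i ∈ I} has a greatest lower bound in the poset Clop(e) if and only if int(⋂ᵢ aᵢ) is clopen, in which case the greatest lower bound equals int(⋂ᵢ aᵢ); (ii) the family has a least upper bound in Clop(e) if and only if cl(⋃ᵢ aᵢ) is clopen, in which case the least upper bound equals cl(⋃ᵢ aᵢ). -/
/-- A binary relation (as a set of pairs) is transitive. -/
def TransRel {E : Type*} (a : Set (E × E)) : Prop :=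
  ∀ x y z : E, (x, y) ∈ a → (y, z) ∈ a → (x, z) ∈ a

/-- The transitive closure of a set of pairs. -/
def tcl {E : Type*} (a : Set (E × E)) : Set (E × E) :=
  {p | Relation.TransGen (fun u v => (u, v) ∈ a) p.1 p.2}

/-- The interior of `a` relative to `e`. -/
def tint {E : Type*} (e a : Set (E × E)) : Set (E × E) :=
  e \ tcl (e \ a)

/-- `a` is a closed subset of `e`. -/
def IsClosedIn {E : Type*} (e a : Set (E × E)) : Prop :=
  a ⊆ e ∧ TransRel a

/-- `a` is an open subset of `e`. -/
def IsOpenIn {E : Type*} (e a : Set (E × E)) : Prop :=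
  a ⊆ e ∧ TransRel (e \ a)

/-- `a` is a clopen subset of `e`. -/
def IsClopenIn {E : Type*} (e a : Set (E × E)) : Prop :=
  a ⊆ e ∧ TransRel a ∧ TransRel (e \ a)

/-- `a` is a regular closed subset of `e`. -/
def RegClosed {E : Type*} (e a : Set (E × E)) : Prop :=
  a ⊆ e ∧ a = tcl (tint e a)

/-- The reflexive preordering `x ⊴ y` associated with `e`. -/
def rle {E : Type*} (e : Set (E × E)) (x y : E) : Prop :=
  (x, y) ∈ e ∨ x = y

/-- `x ≡ y`: `x ⊴ y` and `y ⊴ x`. -/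
def eqv {E : Type*} (e : Set (E × E)) (x y : E) : Prop :=
  rle e x y ∧ rle e y x

/-- `e` is square-free. -/
def SqFree {E : Type*} (e : Set (E × E)) : Prop :=
  ∀ a b x y : E, (a, b) ∈ e → rle e a x → rle e x b → rle e a y → rle e y b →
    rle e x y ∨ rle e y x

/-- The interval `[a,b] = {x | a ⊴ x ⊴ b}`. -/
def cce {E : Type*} (e : Set (E × E)) (a b : E) : Set E :=
  {x | rle e a x ∧ rle e x b}

/-- `(a,b,U) ∈ F(e)`. -/
def Ftriple {E : Type*} (e : Set (E × E)) (a b : E) (U : Set E) : Prop :=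
  (a, b) ∈ e ∧ U ⊆ cce e a b ∧ (a ≠ b → a ∉ U ∧ b ∈ U)

/-- The clopen set `⟨a,b,U⟩ = e ∩ (({a} ∪ Uᶜ) × ({b} ∪ U))`. -/
def pji {E : Type*} (e : Set (E × E)) (a b : E) (U : Set E) : Set (E × E) :=
  e ∩ ((({a} : Set E) ∪ (cce e a b \ U)) ×ˢ (({b} : Set E) ∪ U))

/-- The set `p₋` associated with `p = ⟨a,b,U⟩`: if `a ≠ b` it is
`p \ ([a] × [b])`, and if `a = b` it is `p \ {(a,a)}`. -/
def pminus {E : Type*} (e : Set (E × E)) (a b : E) (U : Set E) : Set (E × E) :=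
  {z ∈ pji e a b U | ¬ ((a ≠ b ∧ eqv e z.1 a ∧ eqv e z.2 b) ∨ (a = b ∧ z = (a, a)))}

/-!
The interior `int A` is the union of the open subsets of `A`, and every open subset `u` of `e`
is a union of clopen sets: for `(x, y) ∈ u`, the pairs of `e` whose first coordinate lies in
`L = {x} ∪ {s | (x, s) ∈ e \ u}` and whose second lies in `R = {y} ∪ {w | (x, w) ∈ u}` form a
clopen set containing `(x, y)` inside `u`. Hence a greatest clopen subset of `⋂ aᵢ` must be
`int (⋂ aᵢ)`. Dually, a least clopen superset `s` of `⋃ aᵢ` contains `cl (⋃ aᵢ)`, and a point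
of `s \ cl (⋃ aᵢ)` would lie in a clopen set disjoint from `cl (⋃ aᵢ)`, whose complement is a
smaller clopen upper bound.
-/

section

variable {E : Type*} {e A B s : Set (E × E)}

lemma subset_tcl (a : Set (E × E)) : a ⊆ tcl a :=
  fun _ hp => Relation.TransGen.single hp

lemma transRel_tcl (a : Set (E × E)) : TransRel (tcl a) :=
  fun _ _ _ h₁ h₂ => Relation.TransGen.trans h₁ h₂

lemma tcl_subset_of_transRel {a b : Set (E × E)} (hab : a ⊆ b) (hb : TransRel b) :
    tcl a ⊆ b := by
  rintro ⟨x, y⟩ (hxy : Relation.TransGen _ x y)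
  induction hxy with
  | single h => exact hab h
  | tail _ h ih => exact hb _ _ _ ih (hab h)

lemma IsClopenIn.isOpenIn {c : Set (E × E)} (hc : IsClopenIn e c) : IsOpenIn e c :=
  ⟨hc.1, hc.2.2⟩

lemma IsClopenIn.diff {c : Set (E × E)} (hc : IsClopenIn e c) : IsClopenIn e (e \ c) :=
  ⟨Set.sdiff_subset, hc.2.2, by rw [Set.sdiff_sdiff_cancel_left hc.1]; exact hc.2.1⟩

lemma isOpenIn_diff_tcl (he : TransRel e) (hB : B ⊆ e) : IsOpenIn e (e \ tcl B) :=
  ⟨Set.sdiff_subset, by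
    rw [Set.sdiff_sdiff_cancel_left (tcl_subset_of_transRel hB he)]; exact transRel_tcl B⟩

lemma tint_subset : tint e A ⊆ A :=
  fun _ hp => by_contra fun h => hp.2 (subset_tcl _ ⟨hp.1, h⟩)

lemma subset_tint_of_isOpenIn {b : Set (E × E)} (hb : IsOpenIn e b) (hbA : b ⊆ A) :
    b ⊆ tint e A := by
  have hcl : tcl (e \ A) ⊆ e \ b :=
    tcl_subset_of_transRel (Set.sdiff_subset_sdiff_right hbA) hb.2
  exact fun p hp => ⟨hb.1 hp, fun h => (hcl h).2 hp⟩

lemma isOpenIn_tint (he : TransRel e) (A : Set (E × E)) : IsOpenIn e (tint e A) :=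
  isOpenIn_diff_tcl he Set.sdiff_subset

/-- Closedness needs nothing; openness holds because a middle point `t` of a chain
`s → t → w` falls in `L` or `R`, which puts `(t, w)` or `(s, t)` back into the set. -/
lemma isClopenIn_inter_prod (he : TransRel e) {L R : Set E}
    (hLR : ∀ s t w, s ∈ L → w ∈ R → (s, t) ∈ e → (t, w) ∈ e → t ∈ L ∨ t ∈ R) :
    IsClopenIn e (e ∩ L ×ˢ R) := by
  refine ⟨Set.inter_subset_left, ?_, ?_⟩
  · rintro s t w ⟨hst, hs, -⟩ ⟨htw, -, hw⟩
    exact ⟨he _ _ _ hst htw, hs, hw⟩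
  · rintro s t w ⟨hst, hst'⟩ ⟨htw, htw'⟩
    refine ⟨he _ _ _ hst htw, ?_⟩
    rintro ⟨-, hs, hw⟩
    rcases hLR s t w hs hw hst htw with ht | ht
    · exact htw' ⟨htw, ht, hw⟩
    · exact hst' ⟨hst, hs, ht⟩

lemma IsOpenIn.exists_isClopenIn_mem_subset (he : TransRel e) {u : Set (E × E)}
    (hu : IsOpenIn e u) {p : E × E} (hp : p ∈ u) :
    ∃ c, IsClopenIn e c ∧ p ∈ c ∧ c ⊆ u := by
  obtain ⟨x, y⟩ := p
  set L : Set E := {s | s = x ∨ (x, s) ∈ e \ u}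
  set R : Set E := {w | w = y ∨ (x, w) ∈ u}
  have hL : ∀ s t, s ∈ L → (s, t) ∈ e → (x, t) ∈ e := by
    rintro s t (rfl | hxs) hst
    exacts [hst, he _ _ _ hxs.1 hst]
  have hcover : ∀ s t w, s ∈ L → w ∈ R → (s, t) ∈ e → (t, w) ∈ e → t ∈ L ∨ t ∈ R :=
    fun s t _ hs _ hst _ => by
      by_cases hxt : (x, t) ∈ u
      exacts [Or.inr (Or.inr hxt), Or.inl (Or.inr ⟨hL s t hs hst, hxt⟩)]
  refine ⟨e ∩ L ×ˢ R, isClopenIn_inter_prod he hcover, ⟨hu.1 hp, Or.inl rfl, Or.inl rfl⟩, ?_⟩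
  rintro ⟨s, w⟩ ⟨hsw, hs, hw⟩
  by_contra hswu
  have hxw : (x, w) ∈ e \ u := by
    rcases hs with rfl | hxs
    exacts [⟨hsw, hswu⟩, hu.2 _ _ _ hxs ⟨hsw, hswu⟩]
  rcases hw with rfl | hxw'
  exacts [hxw.2 hp, hxw.2 hxw']

lemma tint_subset_of_forall_isClopenIn (he : TransRel e) {g : Set (E × E)}
    (h : ∀ b, IsClopenIn e b → b ⊆ A → b ⊆ g) : tint e A ⊆ g := by
  intro p hp
  obtain ⟨c, hc, hpc, hcA⟩ := (isOpenIn_tint he A).exists_isClopenIn_mem_subset he hp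
  exact h c hc (hcA.trans tint_subset) hpc

lemma subset_tcl_of_forall_isClopenIn (he : TransRel e) (hB : B ⊆ e) (hs : s ⊆ e)
    (h : ∀ b, IsClopenIn e b → B ⊆ b → s ⊆ b) : s ⊆ tcl B := by
  intro p hp
  by_contra hpB
  obtain ⟨c, hc, hpc, hcB⟩ :=
    (isOpenIn_diff_tcl he hB).exists_isClopenIn_mem_subset he ⟨hs hp, hpB⟩
  have hBc : B ⊆ e \ c := fun q hq => ⟨hB hq, fun hqc => (hcB hqc).2 (subset_tcl B hq)⟩
  exact (h _ hc.diff hBc hp).2 hpc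

lemma eq_tint_of_isGreatest_clopen (he : TransRel e) {g : Set (E × E)} (hg : IsClopenIn e g)
    (hgA : g ⊆ A) (hmax : ∀ b, IsClopenIn e b → b ⊆ A → b ⊆ g) : g = tint e A :=
  (subset_tint_of_isOpenIn hg.isOpenIn hgA).antisymm (tint_subset_of_forall_isClopenIn he hmax)

lemma eq_tcl_of_isLeast_clopen (he : TransRel e) (hB : B ⊆ e) (hs : IsClopenIn e s)
    (hBs : B ⊆ s) (hmin : ∀ b, IsClopenIn e b → B ⊆ b → s ⊆ b) : s = tcl B :=
  (subset_tcl_of_forall_isClopenIn he hB hs.1 hmin).antisymm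
    (tcl_subset_of_transRel hBs hs.2.1)

end

/-- a family of clopen subsets of `e` has a greatest lower bound in `Clop(e)`
iff `int` of its intersection is clopen, in which case they are equal; and it has a least
upper bound in `Clop(e)` iff `cl` of its union is clopen, in which case they are equal. -/
theorem clopen_meets_joins {E : Type*} (e : Set (E × E)) (he : TransRel e)
    {ι : Type*} (a : ι → Set (E × E)) (ha : ∀ i, IsClopenIn e (a i)) :
    (((∃ g, IsClopenIn e g ∧ (∀ i, g ⊆ a i) ∧
        ∀ b, IsClopenIn e b → (∀ i, b ⊆ a i) → b ⊆ g) ↔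
      IsClopenIn e (tint e (⋂ i, a i))) ∧
      (∀ g, IsClopenIn e g → (∀ i, g ⊆ a i) →
        (∀ b, IsClopenIn e b → (∀ i, b ⊆ a i) → b ⊆ g) → g = tint e (⋂ i, a i))) ∧
    (((∃ s, IsClopenIn e s ∧ (∀ i, a i ⊆ s) ∧
        ∀ b, IsClopenIn e b → (∀ i, a i ⊆ b) → s ⊆ b) ↔
      IsClopenIn e (tcl (⋃ i, a i))) ∧
      (∀ s, IsClopenIn e s → (∀ i, a i ⊆ s) →
        (∀ b, IsClopenIn e b → (∀ i, a i ⊆ b) → s ⊆ b) → s = tcl (⋃ i, a i))) := by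
  have hmeet : ∀ g, IsClopenIn e g → (∀ i, g ⊆ a i) →
      (∀ b, IsClopenIn e b → (∀ i, b ⊆ a i) → b ⊆ g) → g = tint e (⋂ i, a i) :=
    fun g hg hlb hglb => eq_tint_of_isGreatest_clopen he hg (Set.subset_iInter hlb)
      fun b hb hbA => hglb b hb (Set.subset_iInter_iff.mp hbA)
  have hB : (⋃ i, a i) ⊆ e := Set.iUnion_subset fun i => (ha i).1
  have hjoin : ∀ s, IsClopenIn e s → (∀ i, a i ⊆ s) →
      (∀ b, IsClopenIn e b → (∀ i, a i ⊆ b) → s ⊆ b) → s = tcl (⋃ i, a i) :=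
    fun s hs hub hlub => eq_tcl_of_isLeast_clopen he hB hs (Set.iUnion_subset hub)
      fun b hb hBb => hlub b hb (Set.iUnion_subset_iff.mp hBb)
  refine ⟨⟨⟨?_, fun hint => ?_⟩, hmeet⟩, ⟨⟨?_, fun hcl => ?_⟩, hjoin⟩⟩
  · rintro ⟨g, hg, hlb, hglb⟩
    exact hmeet g hg hlb hglb ▸ hg
  · exact ⟨_, hint, fun i => tint_subset.trans (Set.iInter_subset a i),
      fun b hb hba => subset_tint_of_isOpenIn hb.isOpenIn (Set.subset_iInter hba)⟩
  · rintro ⟨s, hs, hub, hlub⟩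
    exact hjoin s hs hub hlub ▸ hs
  · exact ⟨_, hcl, fun i => (Set.subset_iUnion a i).trans (subset_tcl _),
      fun b hb hab => tcl_subset_of_transRel (Set.iUnion_subset hab) hb.2.1⟩
end

section
/- Let e be a transitive relation on a set E, let (a,b,U), (c,d,V) ∈ F(e) with a = b and c ≠ d, and set p = ⟨a,b,U⟩, q = ⟨c,d,V⟩, Uᶜ = [a,b] \ U, Vᶜ = [c,d] \ V. Then p ∩ q ≠ ∅ and p ∩ q₋ = ∅ if and only if a ≡ c, a ≡ d, ({a} ∪ U) ∩ V ≠ ∅, and ({a} ∪ Uᶜ) ∩ Vᶜ ≠ ∅. (This characterizes the arrow relation p ↗ q⊥ between completely join-irreducible and completely meet-irreducible elements of Reg(e).) -/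
/-!
Every pair of the clepsydra `p = ⟨a,a,U⟩` lies in `[a] × [a]`, whereas for `c ≠ d` the bipartite
`q = ⟨c,d,V⟩` is just `e ∩ (Vᶜ × V)` and `q₋` removes from it exactly the pairs in `[c] × [d]`.
Hence a pair in `p ∩ q` witnesses both nonemptiness conditions, and `p ∩ q₋ = ∅` amounts to
`[a] × [a] ⊆ [c] × [d]` on `p ∩ q`, i.e. `a ≡ c` and `a ≡ d`. Conversely, witnesses
`x ∈ ({a} ∪ Uᶜ) ∩ Vᶜ` and `y ∈ ({a} ∪ U) ∩ V` give `(x, y) ∈ p ∩ q`, as `x ⊴ a ◁ a ⊴ y`.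
-/

section
variable {E : Type*} {e : Set (E × E)}

theorem rle_trans (he : TransRel e) {x y z : E} (hxy : rle e x y) (hyz : rle e y z) :
    rle e x z := by
  rcases hxy with hxy | rfl
  · rcases hyz with hyz | rfl
    · exact Or.inl (he _ _ _ hxy hyz)
    · exact Or.inl hxy
  · exact hyz

theorem eqv_refl (x : E) : eqv e x x := ⟨Or.inr rfl, Or.inr rfl⟩

theorem eqv_symm {x y : E} (h : eqv e x y) : eqv e y x := ⟨h.2, h.1⟩

theorem eqv_trans (he : TransRel e) {x y z : E} (hxy : eqv e x y) (hyz : eqv e y z) :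
    eqv e x z :=
  ⟨rle_trans he hxy.1 hyz.1, rle_trans he hyz.2 hxy.2⟩

theorem mem_of_rle_of_mem_of_rle (he : TransRel e) {x a b y : E} (hxa : rle e x a)
    (hab : (a, b) ∈ e) (hby : rle e b y) : (x, y) ∈ e := by
  rcases hxa with hxa | rfl
  · rcases hby with hby | rfl
    · exact he _ _ _ (he _ _ _ hxa hab) hby
    · exact he _ _ _ hxa hab
  · rcases hby with hby | rfl
    · exact he _ _ _ hab hby
    · exact hab

theorem eqv_of_mem_singleton_union {a x : E} {S : Set E} (hS : S ⊆ cce e a a)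
    (hx : x ∈ ({a} : Set E) ∪ S) : eqv e x a := by
  rcases hx with rfl | hx
  · exact eqv_refl x
  · exact eqv_symm (hS hx)

theorem eqv_of_mem_pji_self {a : E} {U : Set E} (hU : U ⊆ cce e a a) {z : E × E}
    (hz : z ∈ pji e a a U) : eqv e z.1 a ∧ eqv e z.2 a :=
  ⟨eqv_of_mem_singleton_union Set.sdiff_subset hz.2.1, eqv_of_mem_singleton_union hU hz.2.2⟩

theorem Ftriple.pji_eq_of_ne {c d : E} {V : Set E} (hq : Ftriple e c d V) (hcd : c ≠ d) :
    pji e c d V = e ∩ ((cce e c d \ V) ×ˢ V) := by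
  obtain ⟨hce, -, hcdV⟩ := hq
  obtain ⟨hcV, hdV⟩ := hcdV hcd
  have hc : c ∈ cce e c d \ V := ⟨⟨Or.inr rfl, Or.inl hce⟩, hcV⟩
  rw [pji, Set.union_eq_right.mpr (Set.singleton_subset_iff.mpr hc),
    Set.union_eq_right.mpr (Set.singleton_subset_iff.mpr hdV)]

theorem inter_pminus_eq_empty_iff_of_ne {c d : E} {V : Set E} (hcd : c ≠ d)
    {s : Set (E × E)} :
    s ∩ pminus e c d V = ∅ ↔ ∀ z ∈ s ∩ pji e c d V, eqv e z.1 c ∧ eqv e z.2 d := by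
  refine ⟨fun h z hz => ?_, fun h => Set.eq_empty_of_forall_notMem
    fun z ⟨hs, hzq, hz⟩ => hz (Or.inl ⟨hcd, h z ⟨hs, hzq⟩⟩)⟩
  by_contra hzcd
  refine Set.eq_empty_iff_forall_notMem.mp h z ⟨hz.1, hz.2, ?_⟩
  rintro (⟨-, hzc, hzd⟩ | ⟨rfl, -⟩)
  · exact hzcd ⟨hzc, hzd⟩
  · exact hcd rfl

end

/-- arrow relation `p ↗ q⊥` for a clepsydra `p` (case `a = b`) and a
bipartite `q` (case `c ≠ d`). -/
theorem arrow_clepsydra_bipartite {E : Type*} (e : Set (E × E)) (he : TransRel e)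
    (a b c d : E) (U V : Set E) (hp : Ftriple e a b U) (hq : Ftriple e c d V)
    (hab : a = b) (hcd : c ≠ d) :
    ((pji e a b U ∩ pji e c d V).Nonempty ∧ pji e a b U ∩ pminus e c d V = ∅) ↔
      (eqv e a c ∧ eqv e a d ∧
        ((({a} : Set E) ∪ U) ∩ V).Nonempty ∧
        ((({a} : Set E) ∪ (cce e a b \ U)) ∩ (cce e c d \ V)).Nonempty) := by
  subst hab
  obtain ⟨haa, hU, -⟩ := hp
  rw [inter_pminus_eq_empty_iff_of_ne hcd, hq.pji_eq_of_ne hcd]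
  constructor
  · rintro ⟨⟨z, hzp, hzq⟩, hpq⟩
    obtain ⟨hzc, hzd⟩ := hpq z ⟨hzp, hzq⟩
    obtain ⟨hz₁, hz₂⟩ := eqv_of_mem_pji_self hU hzp
    exact ⟨eqv_trans he (eqv_symm hz₁) hzc, eqv_trans he (eqv_symm hz₂) hzd,
      ⟨z.2, hzp.2.2, hzq.2.2⟩, ⟨z.1, hzp.2.1, hzq.2.1⟩⟩
  · rintro ⟨hac, had, ⟨y, hyU, hyV⟩, ⟨x, hxU, hxV⟩⟩
    have hxy : (x, y) ∈ e := mem_of_rle_of_mem_of_rle he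
      (eqv_of_mem_singleton_union Set.sdiff_subset hxU).1 haa (eqv_of_mem_singleton_union hU hyU).2
    refine ⟨⟨(x, y), ⟨hxy, hxU, hyU⟩, hxy, hxV, hyV⟩, fun z hz => ?_⟩
    obtain ⟨hz₁, hz₂⟩ := eqv_of_mem_pji_self hU hz.1
    exact ⟨eqv_trans he hz₁ hac, eqv_trans he hz₂ had⟩
end

section
/- Let n be a positive integer and let x be a bipartition of [n] = {1,…,n}. Then x has no isolated points if and only if there exists a family (U_j)_{j∈J} of nonempty proper subsets of [n] such that x is the transitive closure of ⋃_{j∈J} (([n] \ U_j) × U_j). (Equivalently, the elements of the join-subsemilattice of Bip(n) generated by the bipartite join-irreducible elements ⟨U⟩ = ([n] \ U) × U, for ∅ ≠ U ⊊ [n], are exactly the bipartitions without isolated points.) -/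
/-- A bipartition of `Fin n`: a transitive relation whose complement is transitive. -/
def IsBipartition (n : ℕ) (x : Set (Fin n × Fin n)) : Prop :=
  TransRel x ∧ TransRel (Set.univ \ x)

/-- `a` is an isolated point of the bipartition `x`. -/
def IsIsolatedPt (n : ℕ) (x : Set (Fin n × Fin n)) (a : Fin n) : Prop :=
  ∀ i : Fin n, ((a, i) ∈ x ∧ (i, a) ∈ x) ↔ i = a


/-!
Every off-diagonal pair `(a, b)` of a bipartition `x` lies in the cut `Uᶜ × U ⊆ x` with
`U = {i ≠ a | (a, i) ∈ x}`, because the complement of `x` is transitive. Cuts are irreflexive,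
so the transitive closure of the cuts contained in `x` consists of the off-diagonal part of `x`
and of those diagonal pairs `(a, a)` that factor as `a → c → a` with `c ≠ a`; these are all
the diagonal pairs of `x` exactly when `x` has no isolated points.
-/

lemma tcl_subset_of_subset {E : Type*} {r x : Set (E × E)} (h : r ⊆ x) (hx : TransRel x) :
    tcl r ⊆ x := by
  rintro ⟨u, v⟩ (huv : Relation.TransGen _ u v)
  induction huv with
  | single huv => exact h huv
  | tail _ hvw ih => exact hx _ _ _ ih (h hvw)

lemma exists_ne_of_mem_tcl_self {E : Type*} {r : Set (E × E)} {a : E} (ha : (a, a) ∈ tcl r)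
    (hr : (a, a) ∉ r) : ∃ c ≠ a, (a, c) ∈ tcl r ∧ (c, a) ∈ tcl r := by
  obtain ⟨c, hac, hca⟩ := Relation.TransGen.head'_iff.mp ha
  have hne : c ≠ a := by rintro rfl; exact hr hac
  exact ⟨c, hne, .single hac,
    (Relation.reflTransGen_iff_eq_or_transGen.mp hca).resolve_left hne.symm⟩

lemma diag_notMem_iUnion_compl_prod {E : Type*} (S : Set (Set E)) (a : E) :
    (a, a) ∉ ⋃ U ∈ S, Uᶜ ×ˢ U := by
  simp only [Set.mem_iUnion, Set.mem_prod, Set.mem_compl_iff]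
  rintro ⟨U, -, hU, hU'⟩
  exact hU hU'

lemma exists_compl_prod_subset_of_mem {E : Type*} {x : Set (E × E)}
    (hx : TransRel (Set.univ \ x)) {a b : E} (hab : (a, b) ∈ x) (hne : a ≠ b) :
    ∃ U : Set E, a ∉ U ∧ b ∈ U ∧ Uᶜ ×ˢ U ⊆ x := by
  refine ⟨{i | (a, i) ∈ x ∧ i ≠ a}, fun h => h.2 rfl, ⟨hab, hne.symm⟩, ?_⟩
  rintro ⟨c, d⟩ ⟨hc, hd⟩
  simp only [Set.mem_compl_iff, Set.mem_ofPred_eq, not_and, not_ne_iff] at hc hd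
  by_cases hca : c = a
  · exact hca ▸ hd.1
  · by_contra hcd
    exact (hx a c d ⟨trivial, fun h => hca (hc h)⟩ ⟨trivial, hcd⟩).2 hd.1

lemma eq_tcl_iUnion_compl_prod {E : Type*} {x : Set (E × E)} (hx : TransRel x)
    (hx' : TransRel (Set.univ \ x))
    (hdiag : ∀ a, (a, a) ∈ x → ∃ c ≠ a, (a, c) ∈ x ∧ (c, a) ∈ x) :
    x = tcl (⋃ U ∈ {U : Set E | U.Nonempty ∧ U ≠ Set.univ ∧ Uᶜ ×ˢ U ⊆ x},
      Uᶜ ×ˢ U) := by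
  set r := ⋃ U ∈ {U : Set E | U.Nonempty ∧ U ≠ Set.univ ∧ Uᶜ ×ˢ U ⊆ x}, Uᶜ ×ˢ U
  have hr : r ⊆ x := Set.iUnion₂_subset fun U hU => hU.2.2
  have hoff : ∀ a b, (a, b) ∈ x → a ≠ b → (a, b) ∈ r := by
    intro a b hab hne
    obtain ⟨U, haU, hbU, hUx⟩ := exists_compl_prod_subset_of_mem hx' hab hne
    exact Set.mem_biUnion ⟨⟨b, hbU⟩, fun h => haU (h ▸ trivial), hUx⟩ ⟨haU, hbU⟩
  refine Set.Subset.antisymm ?_ (tcl_subset_of_subset hr hx)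
  rintro ⟨a, b⟩ hab
  obtain rfl | hne := eq_or_ne a b
  · obtain ⟨c, hca, hac, hca'⟩ := hdiag a hab
    exact .head (hoff a c hac hca.symm) (.single (hoff c a hca' hca))
  · exact .single (hoff a b hab hne)

lemma not_isIsolatedPt_iff {n : ℕ} {x : Set (Fin n × Fin n)} {a : Fin n} :
    ¬ IsIsolatedPt n x a ↔ ((a, a) ∈ x → ∃ c ≠ a, (a, c) ∈ x ∧ (c, a) ∈ x) := by
  unfold IsIsolatedPt
  constructor
  · intro h haa
    by_contra! hc
    refine h fun i => ⟨fun ⟨hai, hia⟩ => ?_, by rintro rfl; exact ⟨haa, haa⟩⟩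
    by_contra hne
    exact hc i hne hai hia
  · intro h hiso
    obtain ⟨c, hca, hac, hca'⟩ := h ((hiso a).2 rfl).1
    exact hca ((hiso c).1 ⟨hac, hca'⟩)

theorem bipartition_no_isolated_iff_general {n : ℕ}
    (x : Set (Fin n × Fin n)) (hx : IsBipartition n x) :
    (∀ a : Fin n, ¬ IsIsolatedPt n x a) ↔
      ∃ S : Set (Set (Fin n)), (∀ U ∈ S, U.Nonempty ∧ U ≠ Set.univ) ∧
        x = tcl (⋃ U ∈ S, (Uᶜ ×ˢ U)) := by
  simp only [not_isIsolatedPt_iff]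
  constructor
  · intro hdiag
    exact ⟨_, fun U hU => ⟨hU.1, hU.2.1⟩, eq_tcl_iUnion_compl_prod hx.1 hx.2 hdiag⟩
  · rintro ⟨S, -, rfl⟩ a haa
    exact exists_ne_of_mem_tcl_self haa (diag_notMem_iUnion_compl_prod S a)

/-- a bipartition of `[n]` has no isolated points iff it is the transitive
closure of a union of sets `Uᶜ × U` with `∅ ≠ U ⊊ [n]`, i.e., iff it belongs to the
join-subsemilattice of `Bip(n)` generated by the bipartite join-irreducible elements. -/
theorem bipartition_no_isolated_iff {n : ℕ} (hn : 0 < n)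
    (x : Set (Fin n × Fin n)) (hx : IsBipartition n x) :
    (∀ a : Fin n, ¬ IsIsolatedPt n x a) ↔
      ∃ S : Set (Set (Fin n)), (∀ U ∈ S, U.Nonempty ∧ U ≠ Set.univ) ∧
        x = tcl (⋃ U ∈ S, (Uᶜ ×ˢ U)) :=
  bipartition_no_isolated_iff_general x hx
end
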